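/- arXiv:math-ph/0402013 — 5 statements merged into one kernel-verified Lean document; each statement's English description precedes it below -/
import Mathlib

section
/- Let 0 < η < η₀ and let g : ℂ → ℂ be such that the functions ξ ↦ g(−ξ + iη) and ξ ↦ g(ξ − iη) belong to L¹ ∩ L² on (η, ∞), and α ↦ g(α − iα) belongs to L² on (−η, η). Define h : ℝ → ℂ by h(t) = e^{−η₀|t|} ∫_γ e^{itz} g(z) dz. Then h ∈ L²(ℝ). -/
/-!
On `γ` every point satisfies `|Im z| ≤ η`, so `|e^{itz}| ≤ e^{η|t|}` there, and the contour
integral is at most `e^{η|t|}` times the `L¹` norm of `g` along `γ` (finite on the segment because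
`L² ⊆ L¹` on a bounded interval). Hence `|h t| ≤ C e^{(η - η₀)|t|}`, which is square integrable
since `η < η₀`.
-/

open Complex MeasureTheory Set

/-- The contour integral over the contour
`γ = {−ξ + iη : ξ ≥ η} ∪ {α − iα : −η ≤ α ≤ η} ∪ {ξ − iη : ξ ≥ η}`. -/
noncomputable def contourIntegral (η : ℝ) (F : ℂ → ℂ) : ℂ :=
  (∫ ξ in Ioi η, F (-(ξ : ℂ) + (η : ℂ) * I))
  + (1 - I) * (∫ α in (-η)..η, F ((α : ℂ) - (α : ℂ) * I))
  + ∫ ξ in Ioi η, F ((ξ : ℂ) - (η : ℂ) * I)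

lemma integrable_exp_neg_mul_abs {b : ℝ} (hb : 0 < b) :
    Integrable (fun t : ℝ => Real.exp (-b * |t|)) := by
  refine (Continuous.locallyIntegrable (by fun_prop))
    |>.integrable_of_isBigO_atTop_of_norm_isNegInvariant (ae_of_all _ fun t => by simp)
      (Asymptotics.isBigO_refl _ _) ⟨Ioi 0, Filter.Ioi_mem_atTop 0, ?_⟩
  exact (exp_neg_integrableOn_Ioi 0 hb).congr_fun
    (fun t ht => by rw [abs_of_pos (mem_Ioi.1 ht)]) measurableSet_Ioi

lemma memLp_two_exp_mul_abs {a : ℝ} (ha : a < 0) :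
    MemLp (fun t : ℝ => Real.exp (a * |t|)) 2 volume := by
  rw [memLp_two_iff_integrable_sq (by fun_prop)]
  have hsq : (fun t : ℝ => Real.exp (a * |t|) ^ 2) = fun t => Real.exp (-(-2 * a) * |t|) := by
    funext t; rw [sq, ← Real.exp_add]; ring_nf
  rw [hsq]
  exact integrable_exp_neg_mul_abs (by linarith)

lemma norm_exp_I_mul_le {η t : ℝ} {z : ℂ} (hz : |z.im| ≤ η) :
    ‖Complex.exp (I * t * z)‖ ≤ Real.exp (η * |t|) := by
  rw [Complex.norm_exp, Real.exp_le_exp]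
  calc (I * t * z).re = -(t * z.im) := by simp [mul_re]
    _ ≤ |t * z.im| := neg_le_abs _
    _ = |t| * |z.im| := abs_mul _ _
    _ ≤ |t| * η := mul_le_mul_of_nonneg_left hz (abs_nonneg t)
    _ = η * |t| := mul_comm _ _

lemma norm_setIntegral_mul_le {α E : Type*} [MeasurableSpace α] [NormedRing E]
    [NormedSpace ℝ E] {μ : Measure α} {s : Set α} (hs : MeasurableSet s) {φ f : α → E} {M : ℝ}
    (hf : IntegrableOn f s μ) (hφ : ∀ x ∈ s, ‖φ x‖ ≤ M) :
    ‖∫ x in s, φ x * f x ∂μ‖ ≤ M * ∫ x in s, ‖f x‖ ∂μ := by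
  rw [← integral_const_mul]
  refine norm_integral_le_of_norm_le (hf.norm.const_mul M)
    ((ae_restrict_iff' hs).2 (ae_of_all _ fun x hx => ?_))
  exact (norm_mul_le _ _).trans (mul_le_mul_of_nonneg_right (hφ x hx) (norm_nonneg _))

lemma norm_contourIntegral_mul_le {η M : ℝ} (hη : 0 ≤ η) {φ g : ℂ → ℂ}
    (hφ : ∀ z : ℂ, |z.im| ≤ η → ‖φ z‖ ≤ M)
    (hg1 : IntegrableOn (fun ξ : ℝ => g (-(ξ : ℂ) + (η : ℂ) * I)) (Ioi η))
    (hg2 : IntegrableOn (fun α : ℝ => g ((α : ℂ) - (α : ℂ) * I)) (Ioc (-η) η))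
    (hg3 : IntegrableOn (fun ξ : ℝ => g ((ξ : ℂ) - (η : ℂ) * I)) (Ioi η)) :
    ‖contourIntegral η (fun z => φ z * g z)‖
      ≤ M * ((∫ ξ in Ioi η, ‖g (-(ξ : ℂ) + (η : ℂ) * I)‖)
        + 2 * (∫ α in Ioc (-η) η, ‖g ((α : ℂ) - (α : ℂ) * I)‖)
        + ∫ ξ in Ioi η, ‖g ((ξ : ℂ) - (η : ℂ) * I)‖) := by
  have b1 := norm_setIntegral_mul_le measurableSet_Ioi hg1
    (φ := fun ξ : ℝ => φ (-(ξ : ℂ) + (η : ℂ) * I))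
    fun ξ _ => hφ _ (by simp [abs_of_nonneg hη])
  have b2 := norm_setIntegral_mul_le measurableSet_Ioc hg2
    (φ := fun α : ℝ => φ ((α : ℂ) - (α : ℂ) * I))
    fun α hα => hφ _ (by simpa using abs_le.2 ⟨hα.1.le, hα.2⟩)
  have b3 := norm_setIntegral_mul_le measurableSet_Ioi hg3
    (φ := fun ξ : ℝ => φ ((ξ : ℂ) - (η : ℂ) * I))
    fun ξ _ => hφ _ (by simp [abs_of_nonneg hη])
  have h1I : ‖(1 - I : ℂ)‖ ≤ 2 := (norm_sub_le _ _).trans (by norm_num)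
  rw [contourIntegral, intervalIntegral.integral_of_le (neg_le_self hη)]
  refine (norm_add_le _ _).trans ((add_le_add (norm_add_le _ _) le_rfl).trans ?_)
  rw [norm_mul]
  linarith [mul_le_mul h1I b2 (norm_nonneg _) zero_le_two]

lemma aestronglyMeasurable_integral_mul {X Y E : Type*} [TopologicalSpace X]
    [MeasurableSpace X] [OpensMeasurableSpace X] [SecondCountableTopology X]
    [TopologicalSpace Y] [MeasurableSpace Y] [OpensMeasurableSpace Y] [SecondCountableTopology Y]
    [NormedRing E] [NormedSpace ℝ E] {μ : Measure X} {ν : Measure Y} [SFinite ν]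
    {k : X → Y → E} (hk : Continuous (Function.uncurry k)) {f : Y → E}
    (hf : AEStronglyMeasurable f ν) :
    AEStronglyMeasurable (fun x => ∫ y, k x y * f y ∂ν) μ :=
  (hk.aestronglyMeasurable.mul hf.comp_snd).integral_prod_right'

lemma aestronglyMeasurable_contourIntegral_exp_mul {η : ℝ} (hη : 0 ≤ η) {g : ℂ → ℂ}
    (hg1 : AEStronglyMeasurable (fun ξ : ℝ => g (-(ξ : ℂ) + (η : ℂ) * I))
      (volume.restrict (Ioi η)))
    (hg2 : AEStronglyMeasurable (fun α : ℝ => g ((α : ℂ) - (α : ℂ) * I))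
      (volume.restrict (Ioc (-η) η)))
    (hg3 : AEStronglyMeasurable (fun ξ : ℝ => g ((ξ : ℂ) - (η : ℂ) * I))
      (volume.restrict (Ioi η))) :
    AEStronglyMeasurable
      (fun t : ℝ => contourIntegral η (fun z => Complex.exp (I * t * z) * g z)) volume := by
  simp_rw [contourIntegral, intervalIntegral.integral_of_le (neg_le_self hη)]
  exact ((aestronglyMeasurable_integral_mul (by fun_prop) hg1).add
    ((aestronglyMeasurable_integral_mul (by fun_prop) hg2).const_mul _)).add
    (aestronglyMeasurable_integral_mul (by fun_prop) hg3)

theorem stmt2_general (η η₀ : ℝ) (hη : 0 < η) (hηη₀ : η < η₀) (g : ℂ → ℂ)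
    (hg1 : IntegrableOn (fun ξ : ℝ => g (-(ξ : ℂ) + (η : ℂ) * I)) (Ioi η))
    (hg2 : IntegrableOn (fun ξ : ℝ => g ((ξ : ℂ) - (η : ℂ) * I)) (Ioi η))
    (hg3 : MemLp (fun α : ℝ => g ((α : ℂ) - (α : ℂ) * I)) 2 (volume.restrict (Ioo (-η) η)))
    (h : ℝ → ℂ)
    (hdef : ∀ t : ℝ, h t = Real.exp (-η₀ * |t|)
      * contourIntegral η (fun z => Complex.exp (I * (t : ℂ) * z) * g z)) :
    MemLp h 2 volume := by
  have hg3' : IntegrableOn (fun α : ℝ => g ((α : ℂ) - (α : ℂ) * I)) (Ioc (-η) η) := by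
    rw [IntegrableOn, ← Measure.restrict_congr_set Ioo_ae_eq_Ioc]
    exact hg3.integrable (by norm_num)
  obtain ⟨C, hC⟩ : ∃ C : ℝ, ∀ t : ℝ,
      ‖contourIntegral η (fun z => Complex.exp (I * t * z) * g z)‖ ≤ Real.exp (η * |t|) * C :=
    ⟨_, fun t => norm_contourIntegral_mul_le hη.le (fun _ hz => norm_exp_I_mul_le hz)
      hg1 hg3' hg2⟩
  have hmeas : AEStronglyMeasurable h volume := by
    rw [funext hdef]
    exact (Continuous.aestronglyMeasurable (by fun_prop)).mul
      (aestronglyMeasurable_contourIntegral_exp_mul hη.le hg1.1 hg3'.1 hg2.1)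
  refine (memLp_two_exp_mul_abs (a := η - η₀) (by linarith)).of_le_mul (c := C) hmeas
    (ae_of_all _ fun t => ?_)
  calc ‖h t‖ = Real.exp (-η₀ * |t|)
        * ‖contourIntegral η (fun z => Complex.exp (I * t * z) * g z)‖ := by
        rw [hdef, norm_mul, norm_real, Real.norm_of_nonneg (Real.exp_pos _).le]
    _ ≤ Real.exp (-η₀ * |t|) * (Real.exp (η * |t|) * C) := by gcongr; exact hC t
    _ = C * ‖Real.exp ((η - η₀) * |t|)‖ := by
        rw [Real.norm_of_nonneg (Real.exp_pos _).le, ← mul_assoc, ← Real.exp_add]; ring_nf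

theorem stmt2 (η η₀ : ℝ) (hη : 0 < η) (hηη₀ : η < η₀) (g : ℂ → ℂ)
    (hg1 : IntegrableOn (fun ξ : ℝ => g (-(ξ : ℂ) + (η : ℂ) * I)) (Ioi η))
    (hg1' : MemLp (fun ξ : ℝ => g (-(ξ : ℂ) + (η : ℂ) * I)) 2 (volume.restrict (Ioi η)))
    (hg2 : IntegrableOn (fun ξ : ℝ => g ((ξ : ℂ) - (η : ℂ) * I)) (Ioi η))
    (hg2' : MemLp (fun ξ : ℝ => g ((ξ : ℂ) - (η : ℂ) * I)) 2 (volume.restrict (Ioi η)))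
    (hg3 : MemLp (fun α : ℝ => g ((α : ℂ) - (α : ℂ) * I)) 2 (volume.restrict (Ioo (-η) η)))
    (h : ℝ → ℂ)
    (hdef : ∀ t : ℝ, h t = Real.exp (-η₀ * |t|)
      * contourIntegral η (fun z => Complex.exp (I * (t : ℂ) * z) * g z)) :
    MemLp h 2 volume :=
  stmt2_general η η₀ hη hηη₀ g hg1 hg2 hg3 h hdef
end

section
/- Let η > 0 and let Γ denote the open set between the real axis and the contour γ. Let g be a function which is continuous on the closure of Γ, complex-analytic on Γ, and satisfies |g(z)| ≤ C(1 + |Re z|)^{−2} on the closure of Γ for some constant C. Then for every t ∈ ℝ, ∫_{−∞}^{∞} e^{itx} g(x) dx = ∫_γ e^{itz} g(z) dz. -/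
open Complex MeasureTheory Set

/-- The open region `Γ` between the real axis and the contour `γ`. -/
def GammaRegion (η : ℝ) : Set ℂ :=
  {z | z.re < 0 ∧ 0 < z.im ∧ z.im < min (-z.re) η}
  ∪ {z | 0 < z.re ∧ -min z.re η < z.im ∧ z.im < 0}

open Filter Topology
open scoped Interval

/-!
For `0 ≤ a ≤ η` let `J a` be the integral of `F z = e^{itz} g z` along the right half of the
contour `γ` built with `a` in place of `η`; `J 0` is the integral over the positive real axis.
For `a < b`, Cauchy's theorem on the half-strip `re z ≥ b, -b ≤ im z ≤ -a` (a limit of rectangles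
whose far vertical sides vanish by the decay of `F`) identifies `J b - J a` with the integral of
`F` around the small triangle with vertices `a - ai`, `b - ai`, `b - bi`. Since the integral of a
constant around it vanishes, uniform continuity of `F` makes this `o(b - a)` uniformly in `a`, so
`J` is constant on `[0, η]`. The left half follows by applying this to `z ↦ F (-z)`, as `Γ` is
symmetric under `z ↦ -z`.
-/

theorem norm_sub_le_mul_of_forall_norm_sub_le_mul {E : Type*} [NormedAddCommGroup E]
    {f : ℝ → E} {a b ε δ : ℝ} (hab : a ≤ b) (hδ : 0 < δ)
    (hf : ∀ x y, a ≤ x → x ≤ y → y ≤ b → y - x < δ → ‖f y - f x‖ ≤ ε * (y - x)) :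
    ‖f b - f a‖ ≤ ε * (b - a) := by
  obtain ⟨n, hn⟩ := exists_nat_gt ((b - a) / δ)
  have hn0 : (0 : ℝ) < n := lt_of_le_of_lt (div_nonneg (sub_nonneg.2 hab) hδ.le) hn
  set x : ℕ → ℝ := fun k => a + k * ((b - a) / n)
  have hstep : ∀ k, x (k + 1) - x k = (b - a) / n := fun k => by
    simp only [x]; push_cast; ring
  have hstep_lt : (b - a) / n < δ := by
    rw [div_lt_iff₀ hn0]; rw [div_lt_iff₀ hδ] at hn; linarith
  have hx : ∀ k ≤ n, a ≤ x k ∧ x k ≤ b := fun k hk => by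
    have : (k : ℝ) * ((b - a) / n) ≤ b - a :=
      calc (k : ℝ) * ((b - a) / n) ≤ n * ((b - a) / n) := by gcongr
        _ = b - a := by field_simp
    exact ⟨le_add_of_nonneg_right (by have := sub_nonneg.2 hab; positivity),
      by simp only [x]; linarith⟩
  calc ‖f b - f a‖ = ‖∑ k ∈ Finset.range n, (f (x (k + 1)) - f (x k))‖ := by
        rw [Finset.sum_range_sub (fun k => f (x k))]
        simp only [x, Nat.cast_zero, zero_mul, add_zero]
        rw [mul_div_cancel₀ _ hn0.ne', add_sub_cancel]
    _ ≤ ∑ k ∈ Finset.range n, ‖f (x (k + 1)) - f (x k)‖ := norm_sum_le _ _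
    _ ≤ ∑ _k ∈ Finset.range n, ε * ((b - a) / n) := by
        refine Finset.sum_le_sum fun k hk => ?_
        have hk := Finset.mem_range.1 hk
        rw [← hstep k]
        exact hf _ _ (hx k hk.le).1 (by linarith [hstep k, div_nonneg (sub_nonneg.2 hab) hn0.le])
          (hx (k + 1) hk).2 (by rw [hstep]; exact hstep_lt)
    _ = ε * (b - a) := by
        rw [Finset.sum_const, Finset.card_range, nsmul_eq_mul]; field_simp

theorem eq_of_forall_norm_sub_le_eps_mul {E : Type*} [NormedAddCommGroup E] {f : ℝ → E}
    {a b : ℝ} (hab : a ≤ b)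
    (h : ∀ ε > 0, ∃ δ > 0, ∀ x y, a ≤ x → x ≤ y → y ≤ b → y - x < δ →
      ‖f y - f x‖ ≤ ε * (y - x)) :
    f b = f a := by
  rcases hab.eq_or_lt with rfl | hab
  · rfl
  by_contra hne
  have hpos : 0 < ‖f b - f a‖ := norm_pos_iff.2 (sub_ne_zero.2 hne)
  obtain ⟨δ, hδ, hf⟩ := h (‖f b - f a‖ / (2 * (b - a))) (by have := sub_pos.2 hab; positivity)
  have := norm_sub_le_mul_of_forall_norm_sub_le_mul hab.le hδ hf
  rw [div_mul_eq_mul_div, mul_div_mul_right _ _ (sub_pos.2 hab).ne'] at this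
  linarith

theorem norm_intervalIntegral_sub_smul_le {E : Type*} [NormedAddCommGroup E] [NormedSpace ℝ E]
    [CompleteSpace E] {f : ℝ → E} {a b ε : ℝ} {c : E} (hab : a ≤ b)
    (hf : IntervalIntegrable f volume a b) (h : ∀ x ∈ Icc a b, ‖f x - c‖ ≤ ε) :
    ‖(∫ x in a..b, f x) - (b - a) • c‖ ≤ ε * (b - a) := by
  rw [← intervalIntegral.integral_const,
    ← intervalIntegral.integral_sub hf intervalIntegrable_const,
    ← abs_of_nonneg (sub_nonneg.2 hab)]
  refine intervalIntegral.norm_integral_le_of_norm_le_const fun x hx => h x ?_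
  rw [uIoc_of_le hab] at hx
  exact Ioc_subset_Icc_self hx

theorem integrableOn_of_norm_le_one_add_abs_zpow_neg_two {E : Type*} [NormedAddCommGroup E]
    {f : ℝ → E} {s : Set ℝ} {D : ℝ} (hs : MeasurableSet s) (hf : ContinuousOn f s)
    (h : ∀ x ∈ s, ‖f x‖ ≤ D * (1 + |x|) ^ (-2 : ℤ)) :
    IntegrableOn f s := by
  have hg : Integrable fun x : ℝ => D * (1 + |x|) ^ (-2 : ℤ) := by
    have := (integrable_one_add_norm (E := ℝ) (μ := volume) (r := 2) (by simp)).const_mul D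
    convert this using 3 with x
    rw [Real.norm_eq_abs, ← Real.rpow_intCast]; norm_num
  exact hg.integrableOn.mono' (hf.aestronglyMeasurable hs)
    ((ae_restrict_iff' hs).2 (Eventually.of_forall h))

theorem integral_Ioi_sub_integral_Ioi_eq_of_halfStrip {E : Type*} [NormedAddCommGroup E]
    [NormedSpace ℂ E] [CompleteSpace E] {f : ℂ → E} {b c d : ℝ} {φ : ℝ → ℝ} (hcd : c ≤ d)
    (hcont : ContinuousOn f (Ici b ×ℂ Icc c d))
    (hdiff : DifferentiableOn ℂ f (Ioi b ×ℂ Ioo c d))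
    (hic : IntegrableOn (fun x : ℝ => f (x + c * I)) (Ioi b))
    (hid : IntegrableOn (fun x : ℝ => f (x + d * I)) (Ioi b))
    (hbound : ∀ x ≥ b, ∀ y ∈ Icc c d, ‖f (x + y * I)‖ ≤ φ x) (hφ : Tendsto φ atTop (𝓝 0)) :
    (∫ x in Ioi b, f (x + c * I)) - (∫ x in Ioi b, f (x + d * I))
      = I • ∫ y in c..d, f (b + y * I) := by
  have hrect : ∀ᶠ R in atTop, (∫ x in b..R, f (x + c * I)) - (∫ x in b..R, f (x + d * I))
      + I • (∫ y in c..d, f (R + y * I)) - I • (∫ y in c..d, f (b + y * I)) = 0 := by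
    filter_upwards [eventually_ge_atTop b] with R hR
    refine integral_boundary_rect_eq_zero_of_continuousOn_of_differentiableOn f ⟨b, c⟩ ⟨R, d⟩
      (hcont.mono ?_) (hdiff.mono ?_)
    · exact reProdIm_subset_iff'.2 (Or.inl ⟨by simp [uIcc_of_le hR, Icc_subset_Ici_self],
        by simp [uIcc_of_le hcd]⟩)
    · exact reProdIm_subset_iff'.2 (Or.inl ⟨by simp [hR, Ioo_subset_Ioi_self], by simp [hcd]⟩)
  have hvert : Tendsto (fun R : ℝ => ∫ y in c..d, f (R + y * I)) atTop (𝓝 0) := by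
    refine squeeze_zero_norm' ?_ (by simpa using hφ.mul_const |d - c|)
    filter_upwards [eventually_ge_atTop b] with R hR
    refine intervalIntegral.norm_integral_le_of_norm_le_const fun y hy => hbound R hR y ?_
    rw [uIoc_of_le hcd] at hy
    exact Ioc_subset_Icc_self hy
  have hlim := (((intervalIntegral_tendsto_integral_Ioi b hic tendsto_id).sub
    (intervalIntegral_tendsto_integral_Ioi b hid tendsto_id)).add (hvert.const_smul I)).sub
    (tendsto_const_nhds (x := I • ∫ y in c..d, f (b + y * I)))
  have := tendsto_nhds_unique (hlim.congr' hrect) tendsto_const_nhds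
  rwa [smul_zero, add_zero, sub_eq_zero] at this

/-- The closed triangle with vertices `a - a i`, `b - a i` and `b - b i`. -/
def cornerTriangle (a b : ℝ) : Set ℂ :=
  {w | a ≤ w.re ∧ w.re ≤ b ∧ -w.re ≤ w.im ∧ w.im ≤ -a}

theorem norm_integral_boundary_cornerTriangle_le {F : ℂ → ℂ} {a b ε : ℝ} (hab : a ≤ b)
    (hc : ContinuousOn F (cornerTriangle a b))
    (hF : ∀ w ∈ cornerTriangle a b, ‖F w - F (a - a * I)‖ ≤ ε) :
    ‖(1 - I) * (∫ α in a..b, F (α - α * I)) - (∫ x in a..b, F (x - a * I))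
      + I * ∫ y in (-b)..(-a), F (b + y * I)‖ ≤ 4 * ε * (b - a) := by
  set c := F (a - a * I)
  have side : ∀ {u v : ℝ} (p : ℝ → ℂ), u ≤ v → Continuous p →
      (∀ s ∈ Icc u v, p s ∈ cornerTriangle a b) →
      ‖(∫ s in u..v, F (p s)) - (v - u) • c‖ ≤ ε * (v - u) := fun p huv hp hmem =>
    norm_intervalIntegral_sub_smul_le huv
      ((hc.comp hp.continuousOn hmem).intervalIntegrable_of_Icc huv) fun s hs => hF _ (hmem s hs)
  have e₁ := side (fun α : ℝ => (α : ℂ) - α * I) hab (by fun_prop) fun α hα => by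
    simp [cornerTriangle]; exact ⟨hα.1, hα.2, hα.1⟩
  have e₂ := side (fun x : ℝ => (x : ℂ) - a * I) hab (by fun_prop) fun x hx => by
    simp [cornerTriangle]; exact ⟨hx.1, hx.2, hx.1⟩
  have e₃ := side (fun y : ℝ => (b : ℂ) + y * I) (neg_le_neg hab) (by fun_prop) fun y hy => by
    simp [cornerTriangle]; exact ⟨hab, hy.1, hy.2⟩
  have hI : ‖1 - I‖ ≤ 2 := (norm_sub_le _ _).trans (by simp; norm_num)
  -- the integral of the constant `c` around the triangle vanishes
  calc _ = ‖(1 - I) * ((∫ α in a..b, F (α - α * I)) - (b - a) • c)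
        - ((∫ x in a..b, F (x - a * I)) - (b - a) • c)
        + I * ((∫ y in (-b)..(-a), F (b + y * I)) - (-a - -b) • c)‖ := by
          congr 1; simp only [real_smul]; push_cast; ring
    _ ≤ 2 * (ε * (b - a)) + ε * (b - a) + 1 * (ε * (b - a)) := by
      refine (norm_add_le _ _).trans
        (add_le_add ((norm_sub_le _ _).trans (add_le_add ?_ e₂)) ?_)
      · exact (norm_mul_le _ _).trans (mul_le_mul hI e₁ (norm_nonneg _) zero_le_two)
      · rw [norm_mul, norm_I, one_mul, one_mul, show b - a = -a - -b by ring]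
        exact e₃
    _ = 4 * ε * (b - a) := by ring

section GammaRegion

variable {η : ℝ} {z : ℂ}

theorem mem_gammaRegion_of_re_pos (h0 : 0 < z.re) (h1 : -z.re < z.im) (h2 : -η < z.im)
    (h3 : z.im < 0) : z ∈ GammaRegion η :=
  Or.inr ⟨h0, neg_lt.2 (lt_min (by linarith) (by linarith)), h3⟩

theorem neg_mem_gammaRegion (hz : z ∈ GammaRegion η) : -z ∈ GammaRegion η := by
  rcases hz with ⟨h0, h1, h2⟩ | ⟨h0, h1, h2⟩
  · refine Or.inr ⟨by simpa using h0, ?_, by simpa using h1⟩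
    rw [neg_im, neg_re]
    exact neg_lt_neg h2
  · refine Or.inl ⟨by simpa using h0, by simpa using h2, ?_⟩
    rw [neg_im, neg_re, neg_neg]
    exact neg_lt.1 h1

theorem neg_mem_closure_gammaRegion (hz : z ∈ closure (GammaRegion η)) :
    -z ∈ closure (GammaRegion η) :=
  MapsTo.closure (fun _ => neg_mem_gammaRegion) continuous_neg hz

theorem abs_im_le_of_mem_closure_gammaRegion (hz : z ∈ closure (GammaRegion η)) :
    |z.im| ≤ η := by
  refine closure_minimal (fun w hw => ?_)
    (isClosed_le (continuous_abs.comp continuous_im) continuous_const) hz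
  rcases hw with ⟨-, h1, h2⟩ | ⟨-, h1, h2⟩ <;>
  · show |w.im| ≤ η
    rw [abs_le]
    constructor <;> linarith [min_le_right (-w.re) η, min_le_right w.re η]

theorem mem_closure_gammaRegion_of_re_nonneg (hη : 0 < η) (h0 : 0 ≤ z.re) (h1 : -z.re ≤ z.im)
    (h2 : -η ≤ z.im) (h3 : z.im ≤ 0) : z ∈ closure (GammaRegion η) := by
  refine closure_mono ?_ (segment_subset_closure_openSegment (left_mem_segment ℝ z ⟨η, -η / 2⟩))
  rintro w ⟨s, t, hs, ht, hst, rfl⟩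
  have := mul_nonneg hs.le h0
  have := mul_nonneg hs.le (neg_le_iff_add_nonneg.1 h1)
  have := mul_nonneg hs.le (neg_le_iff_add_nonneg.1 h2)
  have := mul_nonpos_of_nonneg_of_nonpos hs.le h3
  have := mul_pos ht hη
  have : s * η + t * η = η := by rw [← add_mul, hst, one_mul]
  apply mem_gammaRegion_of_re_pos <;> simp <;> linarith

theorem ofReal_mem_closure_gammaRegion (hη : 0 < η) (x : ℝ) :
    (x : ℂ) ∈ closure (GammaRegion η) := by
  rcases le_total 0 x with hx | hx
  · exact mem_closure_gammaRegion_of_re_nonneg hη (by simpa) (by simpa) (by simpa using hη.le)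
      (by simp)
  · simpa using neg_mem_closure_gammaRegion (z := ((-x : ℝ) : ℂ))
      (mem_closure_gammaRegion_of_re_nonneg hη (by simpa) (by simpa) (by simpa using hη.le)
        (by simp))

theorem diag_mem_closure_gammaRegion (hη : 0 < η) {α : ℝ} (hα : α ∈ Icc (-η) η) :
    (α : ℂ) - α * I ∈ closure (GammaRegion η) := by
  rcases le_total 0 α with h | h
  · exact mem_closure_gammaRegion_of_re_nonneg hη (by simpa) (by simp) (by simpa using hα.2)
      (by simpa)
  · convert neg_mem_closure_gammaRegion (z := ((-α : ℝ) : ℂ) - ((-α : ℝ) : ℂ) * I)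
      (mem_closure_gammaRegion_of_re_nonneg hη (by simpa) (by simp) (by simpa using hα.1)
        (by simpa)) using 1
    push_cast; ring

theorem norm_cexp_I_mul_le_of_mem_closure_gammaRegion (t : ℝ) (hz : z ∈ closure (GammaRegion η)) :
    ‖Complex.exp (I * t * z)‖ ≤ Real.exp (|t| * η) := by
  rw [norm_exp, Real.exp_le_exp, show (I * t * z).re = -(t * z.im) by simp]
  refine (neg_le_abs _).trans ?_
  rw [abs_mul]
  gcongr
  exact abs_im_le_of_mem_closure_gammaRegion hz

end GammaRegion

/-- The integral of `F` along the right half of the contour `γ` with `η` replaced by `a`. -/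
noncomputable def rightHalfContourIntegral (F : ℂ → ℂ) (a : ℝ) : ℂ :=
  (1 - I) * (∫ α in (0 : ℝ)..a, F (α - α * I)) + ∫ x in Ioi a, F (x - a * I)

section ContourShift

variable {η D : ℝ} {F : ℂ → ℂ}

theorem intervalIntegrable_diag (hη : 0 < η) (hc : ContinuousOn F (closure (GammaRegion η)))
    {u v : ℝ} (hu : u ∈ Icc (-η) η) (hv : v ∈ Icc (-η) η) :
    IntervalIntegrable (fun α : ℝ => F (α - α * I)) volume u v :=
  (hc.comp (by fun_prop) fun _ hα => diag_mem_closure_gammaRegion hη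
    (uIcc_subset_Icc hu hv hα)).intervalIntegrable

theorem integrableOn_Ioi_sub_mul_I (hη : 0 < η) (hc : ContinuousOn F (closure (GammaRegion η)))
    (hb : ∀ z ∈ closure (GammaRegion η), ‖F z‖ ≤ D * (1 + |z.re|) ^ (-2 : ℤ))
    {a : ℝ} (ha : 0 ≤ a) (haη : a ≤ η) :
    IntegrableOn (fun x : ℝ => F (x - a * I)) (Ioi a) := by
  have hmem : ∀ x ∈ Ioi a, (x : ℂ) - a * I ∈ closure (GammaRegion η) := fun x hx =>
    mem_closure_gammaRegion_of_re_nonneg hη (by simp; linarith [mem_Ioi.1 hx])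
      (by simpa using (mem_Ioi.1 hx).le) (by simpa) (by simpa)
  refine integrableOn_of_norm_le_one_add_abs_zpow_neg_two (D := D) measurableSet_Ioi
    (hc.comp (by fun_prop) hmem) fun x hx => ?_
  simpa using hb _ (hmem x hx)

theorem rightHalfContourIntegral_sub (hη : 0 < η) (hc : ContinuousOn F (closure (GammaRegion η)))
    (hd : DifferentiableOn ℂ F (GammaRegion η))
    (hb : ∀ z ∈ closure (GammaRegion η), ‖F z‖ ≤ D * (1 + |z.re|) ^ (-2 : ℤ))
    {a b : ℝ} (ha : 0 ≤ a) (hab : a ≤ b) (hbη : b ≤ η) :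
    rightHalfContourIntegral F b - rightHalfContourIntegral F a
      = (1 - I) * (∫ α in a..b, F (α - α * I)) - (∫ x in a..b, F (x - a * I))
        + I * ∫ y in (-b)..(-a), F (b + y * I) := by
  have hsplit := intervalIntegral.integral_add_adjacent_intervals
    (intervalIntegrable_diag (v := a) hη hc ⟨by linarith, hη.le⟩ ⟨by linarith, by linarith⟩)
    (intervalIntegrable_diag hη hc ⟨by linarith, by linarith⟩ ⟨by linarith, hbη⟩)
  have hIa := integrableOn_Ioi_sub_mul_I hη hc hb ha (hab.trans hbη)
  have hIb := integrableOn_Ioi_sub_mul_I hη hc hb (ha.trans hab) hbη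
  have htail := intervalIntegral.integral_Ioi_sub_Ioi hIa hab
  have hstrip := integral_Ioi_sub_integral_Ioi_eq_of_halfStrip (f := F) (b := b) (c := -b) (d := -a)
    (φ := fun x => D * (1 + |x|) ^ (-2 : ℤ)) (neg_le_neg hab)
    (hc.mono fun z hz => by
      obtain ⟨hre, him⟩ : b ≤ z.re ∧ z.im ∈ Icc (-b) (-a) := hz
      exact mem_closure_gammaRegion_of_re_nonneg hη (by linarith) (by linarith [him.1])
        (by linarith [him.1]) (by linarith [him.2]))
    (hd.mono fun z hz => by
      obtain ⟨hre, him⟩ : b < z.re ∧ z.im ∈ Ioo (-b) (-a) := hz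
      exact mem_gammaRegion_of_re_pos (by linarith) (by linarith [him.1]) (by linarith [him.1])
        (by linarith [him.2]))
    (by simpa [sub_eq_add_neg] using hIb)
    (by simpa [sub_eq_add_neg] using hIa.mono_set (Ioi_subset_Ioi hab))
    (fun x hx y hy => by
      simpa using hb _ (mem_closure_gammaRegion_of_re_nonneg (z := x + y * I) hη (by simp; linarith)
        (by simp; linarith [hy.1]) (by simp; linarith [hy.1]) (by simp; linarith [hy.2])))
    (by simpa using ((tendsto_zpow_atTop_zero (by norm_num : (-2 : ℤ) < 0)).comp
      (tendsto_atTop_add_const_left _ 1 tendsto_abs_atTop_atTop)).const_mul D)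
  simp only [ofReal_neg, neg_mul, ← sub_eq_add_neg, smul_eq_mul] at hstrip
  rw [rightHalfContourIntegral, rightHalfContourIntegral, ← hsplit]
  linear_combination hstrip - htail

theorem exists_norm_rightHalfContourIntegral_sub_le (hη : 0 < η)
    (hc : ContinuousOn F (closure (GammaRegion η))) (hd : DifferentiableOn ℂ F (GammaRegion η))
    (hb : ∀ z ∈ closure (GammaRegion η), ‖F z‖ ≤ D * (1 + |z.re|) ^ (-2 : ℤ)) :
    ∀ ε > 0, ∃ δ > 0, ∀ a b, 0 ≤ a → a ≤ b → b ≤ η → b - a < δ →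
      ‖rightHalfContourIntegral F b - rightHalfContourIntegral F a‖ ≤ ε * (b - a) := by
  intro ε hε
  have hK : IsCompact (closure (GammaRegion η) ∩ Metric.closedBall 0 (2 * η)) :=
    (isCompact_closedBall _ _).inter_left isClosed_closure
  obtain ⟨δ, hδ, hF⟩ := Metric.uniformContinuousOn_iff_le.1
    (hK.uniformContinuousOn_of_continuous (hc.mono inter_subset_left)) (ε / 4) (by positivity)
  refine ⟨δ / 2, by positivity, fun a b ha hab hbη hba => ?_⟩
  have hT : ∀ w ∈ cornerTriangle a b, w ∈ closure (GammaRegion η) ∩ Metric.closedBall 0 (2 * η)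
      ∧ dist w (a - a * I) ≤ δ := by
    rintro w ⟨h₁, h₂, h₃, h₄⟩
    refine ⟨⟨mem_closure_gammaRegion_of_re_nonneg hη (by linarith) h₃ (by linarith) (by linarith),
      ?_⟩, ?_⟩
    · rw [mem_closedBall_zero_iff]
      refine (norm_le_abs_re_add_abs_im w).trans ?_
      rw [abs_of_nonneg (by linarith), abs_of_nonpos (by linarith)]
      linarith
    · rw [dist_eq_norm]
      refine (norm_le_abs_re_add_abs_im _).trans ?_
      have hre : (w - (a - a * I)).re = w.re - a := by simp
      have him : (w - (a - a * I)).im = w.im + a := by simp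
      rw [hre, him, abs_of_nonneg (by linarith), abs_of_nonpos (by linarith)]
      linarith
  have hvertex : (a : ℂ) - a * I ∈ cornerTriangle a b := by simp [cornerTriangle, hab]
  rw [rightHalfContourIntegral_sub hη hc hd hb ha hab hbη]
  calc _ ≤ 4 * (ε / 4) * (b - a) := norm_integral_boundary_cornerTriangle_le hab
        (hc.mono fun w hw => (hT w hw).1.1) fun w hw => by
          rw [← dist_eq_norm]; exact hF _ (hT w hw).1 _ (hT _ hvertex).1 (hT w hw).2
    _ = ε * (b - a) := by ring

theorem integral_Ioi_zero_eq_of_gammaRegion (hη : 0 < η)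
    (hc : ContinuousOn F (closure (GammaRegion η))) (hd : DifferentiableOn ℂ F (GammaRegion η))
    (hb : ∀ z ∈ closure (GammaRegion η), ‖F z‖ ≤ D * (1 + |z.re|) ^ (-2 : ℤ)) :
    ∫ x in Ioi (0 : ℝ), F x
      = (1 - I) * (∫ α in (0 : ℝ)..η, F (α - α * I)) + ∫ ξ in Ioi η, F (ξ - η * I) := by
  have := eq_of_forall_norm_sub_le_eps_mul hη.le
    (exists_norm_rightHalfContourIntegral_sub_le hη hc hd hb)
  simpa [rightHalfContourIntegral] using this.symm

theorem integral_Iic_zero_eq_of_gammaRegion (hη : 0 < η)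
    (hc : ContinuousOn F (closure (GammaRegion η))) (hd : DifferentiableOn ℂ F (GammaRegion η))
    (hb : ∀ z ∈ closure (GammaRegion η), ‖F z‖ ≤ D * (1 + |z.re|) ^ (-2 : ℤ)) :
    ∫ x in Iic (0 : ℝ), F x
      = (1 - I) * (∫ α in (-η)..0, F (α - α * I)) + ∫ ξ in Ioi η, F (-ξ + η * I) := by
  have h := integral_Ioi_zero_eq_of_gammaRegion (F := fun z => F (-z)) hη
    (hc.comp continuous_neg.continuousOn fun _ => neg_mem_closure_gammaRegion)
    (hd.comp (differentiableOn_neg _) fun _ => neg_mem_gammaRegion)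
    (fun z hz => by simpa using hb _ (neg_mem_closure_gammaRegion hz))
  have hreal := integral_comp_neg_Ioi 0 fun x : ℝ => F x
  have hdiag := intervalIntegral.integral_comp_neg (a := 0) (b := η) fun α : ℝ => F (α - α * I)
  simp only [ofReal_neg, neg_zero, neg_sub, neg_mul, sub_neg_eq_add, neg_add_eq_sub]
    at hreal hdiag h ⊢
  rw [← hreal, h, hdiag]

theorem integral_eq_contourIntegral_of_gammaRegion (hη : 0 < η)
    (hc : ContinuousOn F (closure (GammaRegion η))) (hd : DifferentiableOn ℂ F (GammaRegion η))
    (hb : ∀ z ∈ closure (GammaRegion η), ‖F z‖ ≤ D * (1 + |z.re|) ^ (-2 : ℤ)) :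
    ∫ x : ℝ, F x = contourIntegral η F := by
  have hint : Integrable fun x : ℝ => F x :=
    integrableOn_univ.1 <| integrableOn_of_norm_le_one_add_abs_zpow_neg_two MeasurableSet.univ
      (hc.comp continuous_ofReal.continuousOn fun x _ => ofReal_mem_closure_gammaRegion hη x)
      fun x _ => by simpa using hb x (ofReal_mem_closure_gammaRegion hη x)
  have h₁ : -η ∈ Icc (-η) η := ⟨le_rfl, by linarith⟩
  have h₀ : 0 ∈ Icc (-η) η := ⟨by linarith, hη.le⟩
  have h₂ : η ∈ Icc (-η) η := ⟨by linarith, le_rfl⟩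
  rw [contourIntegral,
    ← intervalIntegral.integral_Iic_add_Ioi (b := 0) hint.integrableOn hint.integrableOn,
    ← intervalIntegral.integral_add_adjacent_intervals (intervalIntegrable_diag hη hc h₁ h₀)
      (intervalIntegrable_diag hη hc h₀ h₂),
    integral_Iic_zero_eq_of_gammaRegion hη hc hd hb,
    integral_Ioi_zero_eq_of_gammaRegion hη hc hd hb]
  ring

end ContourShift

theorem stmt3 (η : ℝ) (hη : 0 < η) (g : ℂ → ℂ) (C : ℝ)
    (hcont : ContinuousOn g (closure (GammaRegion η)))
    (hanal : DifferentiableOn ℂ g (GammaRegion η))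
    (hbound : ∀ z ∈ closure (GammaRegion η),
      ‖g z‖ ≤ C * (1 + |z.re|) ^ (-2 : ℤ)) :
    ∀ t : ℝ,
      (∫ x : ℝ, Complex.exp (I * (t : ℂ) * (x : ℂ)) * g x)
        = contourIntegral η (fun z => Complex.exp (I * (t : ℂ) * z) * g z) := by
  intro t
  refine integral_eq_contourIntegral_of_gammaRegion (F := fun z => Complex.exp (I * t * z) * g z)
    (D := Real.exp (|t| * η) * C) hη
    ((by fun_prop : Continuous fun z : ℂ => Complex.exp (I * t * z)).continuousOn.mul hcont)
    ((by fun_prop : Differentiable ℂ fun z : ℂ => Complex.exp (I * t * z)).differentiableOn.mul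
      hanal) fun z hz => ?_
  rw [norm_mul, mul_assoc (Real.exp _)]
  exact mul_le_mul (norm_cexp_I_mul_le_of_mem_closure_gammaRegion t hz) (hbound z hz)
    (norm_nonneg _) (Real.exp_nonneg _)
end

section
/- Let H be a complex Hilbert space, p ≥ 1, U an open subset of ℂᵖ, and z₀ ∈ U. Let T : U → B(H) be an analytic map such that T(z) is a compact operator for every z ∈ U. Then there exist an open neighborhood U₀ ⊆ U of z₀ and an analytic function h : U₀ → ℂ such that for every z ∈ U₀, the operator I + T(z) is invertible in B(H) if and only if h(z) ≠ 0. -/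
/-!
Choose a finite-rank operator `R = π_V ∘ T z₀` (with `π_V` the orthogonal projection onto a
finite-dimensional subspace `V`) such that `‖T z₀ - R‖ < 1`; near `z₀` also `‖T z - R‖ < 1`, so
`D z = 1 + (T z - R)` is invertible and depends analytically on `z`. From
`1 + T z = (1 + R D(z)⁻¹) D(z)` and `R D(z)⁻¹ = ι ∘ A z` with `A z : H → V`, the operator
`1 + T z` is invertible iff `1 + ι ∘ A z` is, iff the endomorphism `1 + A z ∘ ι` of `V` is, iff
`h z = det (1 + A z ∘ ι) ≠ 0`; and `h` is analytic, being a polynomial in matrix entries that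
are continuous linear functions of `D(z)⁻¹`.
-/

open Metric Set

section Jacobson

variable {R E F : Type*} [Ring R] [TopologicalSpace E] [AddCommGroup E] [Module R E]
  [IsTopologicalAddGroup E] [TopologicalSpace F] [AddCommGroup F] [Module R F]
  [IsTopologicalAddGroup F]

theorem ContinuousLinearMap.isUnit_one_add_comp_of_isUnit_one_add_comp
    {A : E →L[R] F} {B : F →L[R] E} (h : IsUnit (1 + A ∘L B)) : IsUnit (1 + B ∘L A) := by
  obtain ⟨u, hu⟩ := h
  set v : F →L[R] F := ↑u⁻¹
  have hvr : ∀ y, v y + A (B (v y)) = y := fun y => by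
    simpa [v, hu] using congr($(u.mul_inv) y)
  have hvl : ∀ y, v (y + A (B y)) = y := fun y => by
    simpa [v, hu] using congr($(u.inv_mul) y)
  refine ⟨⟨1 + B ∘L A, 1 - B ∘L v ∘L A, ?_, ?_⟩, rfl⟩
  · ext x
    have := congrArg B (hvr (A x))
    simp only [mul_apply_eq_comp, add_apply, sub_apply, one_apply_eq_self,
      ContinuousLinearMap.comp_apply, map_add, map_sub] at this ⊢
    linear_combination (norm := module) -this
  · ext x
    have := congrArg B (hvl (A x))
    simp only [mul_apply_eq_comp, add_apply, sub_apply, one_apply_eq_self,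
      ContinuousLinearMap.comp_apply, map_add] at this ⊢
    linear_combination (norm := module) -this

theorem ContinuousLinearMap.isUnit_one_add_comp_comm (A : E →L[R] F) (B : F →L[R] E) :
    IsUnit (1 + A ∘L B) ↔ IsUnit (1 + B ∘L A) :=
  ⟨isUnit_one_add_comp_of_isUnit_one_add_comp, isUnit_one_add_comp_of_isUnit_one_add_comp⟩

end Jacobson

section

variable {𝕜 E : Type*} [NontriviallyNormedField 𝕜] [NormedAddCommGroup E] [NormedSpace 𝕜 E]

theorem AnalyticAt.matrix_det {n : Type*} [Fintype n] [DecidableEq n] {M : E → Matrix n n 𝕜}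
    {z : E} (hM : ∀ i j, AnalyticAt 𝕜 (fun x => M x i j) z) :
    AnalyticAt 𝕜 (fun x => (M x).det) z := by
  simp only [Matrix.det_apply']
  exact Finset.analyticAt_fun_sum _ fun _ _ => analyticAt_const.mul <|
    Finset.analyticAt_fun_prod _ fun _ _ => hM _ _

theorem AnalyticAt.clm_det [CompleteSpace 𝕜] {V : Type*} [NormedAddCommGroup V] [NormedSpace 𝕜 V]
    [FiniteDimensional 𝕜 V] {F : E → V →L[𝕜] V} {z : E} (hF : AnalyticAt 𝕜 F z) :
    AnalyticAt 𝕜 (fun x => (F x).det) z := by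
  let b := Module.finBasis 𝕜 V
  simp only [ContinuousLinearMap.det, ← LinearMap.det_toMatrix b]
  refine AnalyticAt.matrix_det fun i j => ?_
  simp only [LinearMap.toMatrix_apply]
  exact ((LinearMap.toContinuousLinearMap (b.coord i)).comp
    (ContinuousLinearMap.apply 𝕜 V (b j))).analyticAt _ |>.comp hF

theorem ContinuousLinearMap.isUnit_iff_det_ne_zero [CompleteSpace 𝕜] {V : Type*}
    [NormedAddCommGroup V] [NormedSpace 𝕜 V] [FiniteDimensional 𝕜 V] (f : V →L[𝕜] V) :
    IsUnit f ↔ f.det ≠ 0 := by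
  have : CompleteSpace V := FiniteDimensional.complete 𝕜 V
  rw [isUnit_iff_isUnit_toLinearMap, LinearMap.isUnit_iff_isUnit_det, isUnit_iff_ne_zero]

end

section

variable {A : Type*} [NormedRing A] [HasSummableGeomSeries A]

theorem isUnit_one_add_of_norm_lt_one {x : A} (hx : ‖x‖ < 1) : IsUnit (1 + x) := by
  have := (Units.oneSub (-x) (by rwa [norm_neg])).isUnit
  rwa [Units.val_oneSub, sub_neg_eq_add] at this

theorem isUnit_one_add_iff_of_norm_sub_lt_one {a r : A} (h : ‖a - r‖ < 1) :
    IsUnit (1 + a) ↔ IsUnit (1 + r * Ring.inverse (1 + (a - r))) := by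
  obtain ⟨D, hD⟩ := isUnit_one_add_of_norm_lt_one h
  have hfactor : (1 + r * ↑D⁻¹) * D = 1 + a := by
    rw [add_mul, one_mul, mul_assoc, Units.inv_mul, mul_one, hD]
    abel
  rw [← hD, Ring.inverse_unit, ← hfactor, Units.isUnit_mul_units]

end

section

variable {𝕜 H : Type*} [RCLike 𝕜] [NormedAddCommGroup H] [InnerProductSpace 𝕜 H]

theorem Submodule.norm_sub_starProjection_le {V : Submodule 𝕜 H} [V.HasOrthogonalProjection]
    (y : H) {v : H} (hv : v ∈ V) : ‖y - V.starProjection y‖ ≤ ‖y - v‖ := by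
  rw [starProjection_minimal]
  exact ciInf_le ⟨0, forall_mem_range.2 fun _ => norm_nonneg _⟩ (⟨v, hv⟩ : V)

theorem IsCompactOperator.exists_norm_sub_starProjection_comp_lt {K : H →L[𝕜] H}
    (hK : IsCompactOperator K) {ε : ℝ} (hε : 0 < ε) :
    ∃ (V : Submodule 𝕜 H) (_ : FiniteDimensional 𝕜 V), ‖K - V.starProjection ∘L K‖ < ε := by
  have hbdd : TotallyBounded (K '' closedBall 0 1) :=
    (hK.isCompact_closure_image_closedBall 1).totallyBounded.subset subset_closure
  obtain ⟨t, -, ht, hcover⟩ := finite_approx_of_totallyBounded hbdd (ε / 2) (by positivity)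
  have : FiniteDimensional 𝕜 (Submodule.span 𝕜 t) := FiniteDimensional.span_of_finite 𝕜 ht
  refine ⟨Submodule.span 𝕜 t, this, ?_⟩
  refine lt_of_le_of_lt (ContinuousLinearMap.opNorm_le_of_unit_norm (by positivity) fun x hx => ?_)
    (half_lt_self hε)
  obtain ⟨y, hyt, hy⟩ := mem_iUnion₂.1 (hcover ⟨x, mem_closedBall_zero_iff.2 hx.le, rfl⟩)
  calc ‖K x - (Submodule.span 𝕜 t).starProjection (K x)‖ ≤ ‖K x - y‖ :=
        Submodule.norm_sub_starProjection_le _ (Submodule.subset_span hyt)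
    _ ≤ ε / 2 := (mem_ball_iff_norm.1 hy).le

end

theorem stmt8_general (H : Type*) [NormedAddCommGroup H] [InnerProductSpace ℂ H] [CompleteSpace H]
    (p : ℕ) (U : Set (Fin p → ℂ)) (hU : IsOpen U)
    (z₀ : Fin p → ℂ) (hz₀ : z₀ ∈ U)
    (T : (Fin p → ℂ) → (H →L[ℂ] H))
    (hT : AnalyticOnNhd ℂ T U)
    (hTcomp : ∀ z ∈ U, IsCompactOperator (T z)) :
    ∃ U₀ : Set (Fin p → ℂ), IsOpen U₀ ∧ U₀ ⊆ U ∧ z₀ ∈ U₀ ∧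
      ∃ h : (Fin p → ℂ) → ℂ, AnalyticOnNhd ℂ h U₀ ∧
        ∀ z ∈ U₀, IsUnit (1 + T z) ↔ h z ≠ 0 := by
  obtain ⟨V, _, hV⟩ := (hTcomp z₀ hz₀).exists_norm_sub_starProjection_comp_lt one_pos
  set P := V.orthogonalProjectionOnto ∘L T z₀
  set R := V.starProjection ∘L T z₀
  set W := fun z => Ring.inverse (1 + (T z - R))
  set U₀ := U ∩ {z | ‖T z - R‖ < 1}
  have hU₀ : IsOpen U₀ :=
    (hT.continuousOn.sub continuousOn_const).norm.isOpen_inter_preimage hU isOpen_Iio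
  have hW : AnalyticOnNhd ℂ W U₀ := fun z hz => by
    obtain ⟨D, hD⟩ := isUnit_one_add_of_norm_lt_one hz.2
    have := analyticAt_inverse (𝕜 := ℂ) D
    rw [hD] at this
    exact this.comp (f := fun z => 1 + (T z - R))
      (analyticAt_const.add ((hT z hz.1).sub analyticAt_const))
  refine ⟨U₀, hU₀, inter_subset_left, ⟨hz₀, hV⟩, fun z => (1 + P ∘L W z ∘L V.subtypeL).det,
    fun z hz => ?_, fun z hz => ?_⟩
  · refine AnalyticAt.clm_det (analyticAt_const.add ?_)
    exact (((ContinuousLinearMap.compL ℂ V H V P).comp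
      ((ContinuousLinearMap.compL ℂ V H H).flip V.subtypeL)).analyticAt _).comp (hW z hz)
  · rw [isUnit_one_add_iff_of_norm_sub_lt_one hz.2, ← ContinuousLinearMap.isUnit_iff_det_ne_zero]
    exact ContinuousLinearMap.isUnit_one_add_comp_comm V.subtypeL (P ∘L W z)

theorem stmt8 (H : Type*) [NormedAddCommGroup H] [InnerProductSpace ℂ H] [CompleteSpace H]
    (p : ℕ) (hp : 1 ≤ p) (U : Set (Fin p → ℂ)) (hU : IsOpen U)
    (z₀ : Fin p → ℂ) (hz₀ : z₀ ∈ U)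
    (T : (Fin p → ℂ) → (H →L[ℂ] H))
    (hT : AnalyticOnNhd ℂ T U)
    (hTcomp : ∀ z ∈ U, IsCompactOperator (T z)) :
    ∃ U₀ : Set (Fin p → ℂ), IsOpen U₀ ∧ U₀ ⊆ U ∧ z₀ ∈ U₀ ∧
      ∃ h : (Fin p → ℂ) → ℂ, AnalyticOnNhd ℂ h U₀ ∧
        ∀ z ∈ U₀, IsUnit (1 + T z) ↔ h z ≠ 0 :=
  stmt8_general H p U hU z₀ hz₀ T hT hTcomp
end

section
/- Let m ≥ 1, d ≥ 1, and write points of ℝ^{m+d} as (x, y) with x ∈ ℝᵐ, y ∈ ℝᵈ; ∂_{y_j} denotes the derivative in the j-th y-variable. Let g : ℝ^{m+d} → ℝ be C² with g > 0 everywhere, let V : ℝ^{m+d} → ℂ be a function, let u : ℝ^{m+d} → ℂ be C², let k ∈ ℂᵈ and λ ∈ ℂ. Set v = g^{−1/2} u and W(λ) = g^{−1} ( Δg/2 − |∇g|²/(4g) + V + λ(g − 1) ). Then, pointwise on ℝ^{m+d}: −div(g ∇v) − 2i g Σ_{j=1}^d k_j ∂_{y_j} v − i (Σ_{j=1}^d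 k_j ∂_{y_j} g) v + (Σ_{j=1}^d k_j²) g v + (V − λ) v = g^{1/2} ( −Δu − 2i Σ_{j=1}^d k_j ∂_{y_j} u + (Σ_{j=1}^d k_j²) u + (W(λ) − λ) u ). -/
open Complex

/-- Partial derivative in the `i`-th variable. -/
noncomputable def pd {N : ℕ} {V : Type*} [NormedAddCommGroup V] [NormedSpace ℝ V]
    (i : Fin N) (F : (Fin N → ℝ) → V) (x : Fin N → ℝ) : V :=
  deriv (fun t => F (Function.update x i t)) (x i)

/-!
Along a coordinate line write `s = √g`, so that `v = u / s`. The product rule gives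
`s² (u / s)' = s u' - s' u`, hence `(g v')' = s u'' - s'' u`: conjugating the divergence-form
operator by `√g` produces the Laplacian plus the potential `s'' / s`. With
`s' = g' / (2 s)` and `s'' = g'' / (2 s) - g'² / (4 g s)`, summing over the coordinates turns
`s'' / s` into `Δg / (2g) - |∇g|² / (4g²)`; the first-order terms in `k` are matched in the same
way, and what remains is field arithmetic with `g = s²`.
-/

section ConjugationIdentity

variable {𝕜 𝕜' : Type*} [NontriviallyNormedField 𝕜] [NontriviallyNormedField 𝕜']
  [NormedAlgebra 𝕜 𝕜'] {S U : 𝕜 → 𝕜'}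

theorem sq_mul_deriv_div {x : 𝕜} (hS : DifferentiableAt 𝕜 S x) (hU : DifferentiableAt 𝕜 U x)
    (hx : S x ≠ 0) :
    S x ^ 2 * deriv (fun t => U t / S t) x = S x * deriv U x - deriv S x * U x := by
  rw [deriv_fun_div hU hS hx]
  field_simp

theorem deriv_sq_mul_deriv_div (hS : ContDiff 𝕜 2 S) (hU : ContDiff 𝕜 2 U) (hS0 : ∀ t, S t ≠ 0)
    (x : 𝕜) :
    deriv (fun t => S t ^ 2 * deriv (fun r => U r / S r) t) x
      = S x * deriv (deriv U) x - deriv (deriv S) x * U x := by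
  have hS1 := hS.differentiable two_ne_zero
  have hU1 := hU.differentiable two_ne_zero
  have hS2 := hS.differentiable_deriv_two
  have hU2 := hU.differentiable_deriv_two
  simp_rw [sq_mul_deriv_div (hS1 _) (hU1 _) (hS0 _)]
  rw [(((hS1 x).hasDerivAt.fun_mul (hU2 x).hasDerivAt).fun_sub
    ((hS2 x).hasDerivAt.fun_mul (hU1 x).hasDerivAt)).deriv]
  ring

end ConjugationIdentity

theorem deriv_ofReal_comp {f : ℝ → ℝ} (hf : Differentiable ℝ f) :
    deriv (fun t => (f t : ℂ)) = fun t => ((deriv f t : ℝ) : ℂ) :=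
  funext fun t => (hf t).hasDerivAt.ofReal_comp.deriv

section SqrtComp

variable {G : ℝ → ℝ}

theorem deriv_deriv_sqrt_comp (hG : ContDiff ℝ 2 G) (hpos : ∀ t, 0 < G t) (t : ℝ) :
    deriv (deriv fun s => √(G s)) t
      = deriv (deriv G) t / (2 * √(G t)) - deriv G t ^ 2 / (4 * G t * √(G t)) := by
  have hG1 := hG.differentiable two_ne_zero
  have hG2 := hG.differentiable_deriv_two
  have hne : ∀ s, G s ≠ 0 := fun s => (hpos s).ne'
  have hsqrt : √(G t) ≠ 0 := (Real.sqrt_pos.mpr (hpos t)).ne'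
  have hderiv : deriv (fun s => √(G s)) = fun s => deriv G s / (2 * √(G s)) :=
    funext fun s => deriv_sqrt (hG1 s) (hne s)
  rw [hderiv, deriv_fun_div (hG2 t) (((hG1 t).sqrt (hne t)).const_mul 2) (mul_ne_zero two_ne_zero hsqrt),
    deriv_const_mul _ ((hG1 t).sqrt (hne t)), deriv_sqrt (hG1 t) (hne t)]
  field_simp
  rw [Real.sq_sqrt (hpos t).le]
  field_simp [hne t]
  ring

theorem deriv_div_ofReal_sqrt {U : ℝ → ℂ} {t : ℝ} (hG : DifferentiableAt ℝ G t) (hpos : 0 < G t)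
    (hU : DifferentiableAt ℝ U t) :
    deriv (fun s => U s / √(G s)) t
      = deriv U t / √(G t) - ((deriv G t : ℝ) : ℂ) / (2 * G t * √(G t)) * U t := by
  have hsqrt : (√(G t) : ℂ) ≠ 0 := by exact_mod_cast (Real.sqrt_pos.mpr hpos).ne'
  have hS : HasDerivAt (fun s => (√(G s) : ℂ)) (deriv G t / (2 * √(G t)) : ℝ) t :=
    (hG.hasDerivAt.sqrt hpos.ne').ofReal_comp
  rw [(hU.hasDerivAt.fun_div hS hsqrt).deriv]
  have hsq : (√(G t) : ℂ) ^ 2 = G t := by exact_mod_cast Real.sq_sqrt hpos.le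
  push_cast
  rw [← hsq]
  field_simp

theorem deriv_mul_deriv_div_ofReal_sqrt {U : ℝ → ℂ} (hG : ContDiff ℝ 2 G) (hpos : ∀ t, 0 < G t)
    (hU : ContDiff ℝ 2 U) (t : ℝ) :
    deriv (fun s => (G s : ℂ) * deriv (fun r => U r / √(G r)) s) t
      = √(G t) * deriv (deriv U) t
        - ((deriv (deriv G) t / (2 * √(G t)) - deriv G t ^ 2 / (4 * G t * √(G t)) : ℝ) : ℂ)
          * U t := by
  have hsqrt : ContDiff ℝ 2 fun s => √(G s) := hG.sqrt fun s => (hpos s).ne'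
  have hS : ContDiff ℝ 2 fun s => (√(G s) : ℂ) := ofRealCLM.contDiff.comp hsqrt
  have hsq : ∀ s, (G s : ℂ) = (√(G s) : ℂ) ^ 2 := fun s => by
    exact_mod_cast (Real.sq_sqrt (hpos s).le).symm
  simp_rw [hsq]
  rw [deriv_sq_mul_deriv_div hS hU (fun s => by exact_mod_cast (Real.sqrt_pos.mpr (hpos s)).ne') t,
    deriv_ofReal_comp (hsqrt.differentiable two_ne_zero),
    deriv_ofReal_comp hsqrt.differentiable_deriv_two]
  beta_reduce
  rw [deriv_deriv_sqrt_comp hG hpos]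

end SqrtComp

section PartialDerivatives

variable {N : ℕ} {g : (Fin N → ℝ) → ℝ} {u : (Fin N → ℝ) → ℂ}

theorem pd_div_sqrt (hg : Differentiable ℝ g) (hgpos : ∀ y, 0 < g y) (hu : Differentiable ℝ u)
    (i : Fin N) (x : Fin N → ℝ) :
    pd i (fun y => u y / √(g y)) x
      = pd i u x / √(g x) - ((pd i g x : ℝ) : ℂ) / (2 * g x * √(g x)) * u x := by
  have hline := (contDiff_update (𝕜 := ℝ) 1 x i).differentiable one_ne_zero
  simpa only [pd, Function.update_eq_self] using
    deriv_div_ofReal_sqrt (G := fun t => g (Function.update x i t))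
      (U := fun t => u (Function.update x i t)) (hg.comp hline (x i)) (hgpos _)
      (hu.comp hline (x i))

theorem pd_mul_pd_div_sqrt (hg : ContDiff ℝ 2 g) (hgpos : ∀ y, 0 < g y) (hu : ContDiff ℝ 2 u)
    (i : Fin N) (x : Fin N → ℝ) :
    pd i (fun y => (g y : ℂ) * pd i (fun y => u y / √(g y)) y) x
      = √(g x) * pd i (pd i u) x
        - ((pd i (pd i g) x / (2 * √(g x)) - pd i g x ^ 2 / (4 * g x * √(g x)) : ℝ) : ℂ)
          * u x := by
  have hline := contDiff_update (𝕜 := ℝ) 2 x i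
  simpa only [pd, Function.update_idem, Function.update_self, Function.update_eq_self] using
    deriv_mul_deriv_div_ofReal_sqrt (G := fun t => g (Function.update x i t))
      (U := fun t => u (Function.update x i t)) (hg.comp hline) (fun _ => hgpos _)
      (hu.comp hline) (x i)

theorem sum_pd_mul_pd_div_sqrt (hg : ContDiff ℝ 2 g) (hgpos : ∀ y, 0 < g y)
    (hu : ContDiff ℝ 2 u) (x : Fin N → ℝ) :
    ∑ i, pd i (fun y => (g y : ℂ) * pd i (fun y => u y / √(g y)) y) x
      = √(g x) * ∑ i, pd i (pd i u) x - (((∑ i, pd i (pd i g) x : ℝ) : ℂ) / (2 * √(g x))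
          - ((∑ i, pd i g x ^ 2 : ℝ) : ℂ) / (4 * g x * √(g x))) * u x := by
  simp only [pd_mul_pd_div_sqrt hg hgpos hu]
  push_cast
  simp only [Finset.sum_sub_distrib, Finset.mul_sum, Finset.sum_mul, Finset.sum_div, sub_mul]

theorem sum_mul_pd_div_sqrt {ι : Type*} (s : Finset ι) (e : ι → Fin N) (k : ι → ℂ)
    (hg : Differentiable ℝ g) (hgpos : ∀ y, 0 < g y) (hu : Differentiable ℝ u)
    (x : Fin N → ℝ) :
    ∑ j ∈ s, k j * pd (e j) (fun y => u y / √(g y)) x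
      = (∑ j ∈ s, k j * pd (e j) u x) / √(g x)
        - (∑ j ∈ s, k j * ((pd (e j) g x : ℝ) : ℂ)) / (2 * g x * √(g x)) * u x := by
  simp only [pd_div_sqrt hg hgpos hu, mul_sub, Finset.sum_sub_distrib, Finset.sum_mul,
    Finset.sum_div, mul_div_assoc, mul_assoc]

end PartialDerivatives

theorem stmt9_general (m d : ℕ)
    (g : (Fin (m + d) → ℝ) → ℝ) (hg : ContDiff ℝ 2 g) (hgpos : ∀ x, 0 < g x)
    (V : (Fin (m + d) → ℝ) → ℂ)
    (u : (Fin (m + d) → ℝ) → ℂ) (hu : ContDiff ℝ 2 u)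
    (k : Fin d → ℂ) (lam : ℂ)
    (v : (Fin (m + d) → ℝ) → ℂ)
    (hv : ∀ x, v x = ((Real.sqrt (g x) : ℝ) : ℂ)⁻¹ * u x)
    (Wl : (Fin (m + d) → ℝ) → ℂ)
    (hWl : ∀ x, Wl x = ((g x : ℝ) : ℂ)⁻¹ *
      ((((∑ i : Fin (m + d), pd i (pd i g) x) : ℝ) : ℂ) / 2
        - (((∑ i : Fin (m + d), (pd i g x) ^ 2) : ℝ) : ℂ) / (4 * ((g x : ℝ) : ℂ))
        + V x + lam * (((g x : ℝ) : ℂ) - 1))) :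
    ∀ x : Fin (m + d) → ℝ,
      -(∑ i : Fin (m + d), pd i (fun x' => ((g x' : ℝ) : ℂ) * pd i v x') x)
        - 2 * I * ((g x : ℝ) : ℂ) * (∑ j : Fin d, k j * pd (Fin.natAdd m j) v x)
        - I * (∑ j : Fin d, k j * ((pd (Fin.natAdd m j) g x : ℝ) : ℂ)) * v x
        + (∑ j : Fin d, (k j) ^ 2) * ((g x : ℝ) : ℂ) * v x
        + (V x - lam) * v x
      = ((Real.sqrt (g x) : ℝ) : ℂ) *
        (-(∑ i : Fin (m + d), pd i (pd i u) x)
          - 2 * I * (∑ j : Fin d, k j * pd (Fin.natAdd m j) u x)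
          + (∑ j : Fin d, (k j) ^ 2) * u x
          + (Wl x - lam) * u x) := by
  obtain rfl : v = fun y => u y / √(g y) := funext fun y => (hv y).trans (inv_mul_eq_div _ _)
  intro x
  have hs : ((√(g x) : ℝ) : ℂ) ≠ 0 := by exact_mod_cast (Real.sqrt_pos.mpr (hgpos x)).ne'
  have hsq : (g x : ℂ) = ((√(g x) : ℝ) : ℂ) ^ 2 := by
    exact_mod_cast (Real.sq_sqrt (hgpos x).le).symm
  rw [sum_pd_mul_pd_div_sqrt hg hgpos hu,
    sum_mul_pd_div_sqrt _ _ _ (hg.differentiable two_ne_zero) hgpos (hu.differentiable two_ne_zero),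
    hWl, hsq]
  field_simp
  ring

theorem stmt9 (m d : ℕ) (hm : 1 ≤ m) (hd : 1 ≤ d)
    (g : (Fin (m + d) → ℝ) → ℝ) (hg : ContDiff ℝ 2 g) (hgpos : ∀ x, 0 < g x)
    (V : (Fin (m + d) → ℝ) → ℂ)
    (u : (Fin (m + d) → ℝ) → ℂ) (hu : ContDiff ℝ 2 u)
    (k : Fin d → ℂ) (lam : ℂ)
    (v : (Fin (m + d) → ℝ) → ℂ)
    (hv : ∀ x, v x = ((Real.sqrt (g x) : ℝ) : ℂ)⁻¹ * u x)
    (Wl : (Fin (m + d) → ℝ) → ℂ)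
    (hWl : ∀ x, Wl x = ((g x : ℝ) : ℂ)⁻¹ *
      ((((∑ i : Fin (m + d), pd i (pd i g) x) : ℝ) : ℂ) / 2
        - (((∑ i : Fin (m + d), (pd i g x) ^ 2) : ℝ) : ℂ) / (4 * ((g x : ℝ) : ℂ))
        + V x + lam * (((g x : ℝ) : ℂ) - 1))) :
    ∀ x : Fin (m + d) → ℝ,
      -(∑ i : Fin (m + d), pd i (fun x' => ((g x' : ℝ) : ℂ) * pd i v x') x)
        - 2 * I * ((g x : ℝ) : ℂ) * (∑ j : Fin d, k j * pd (Fin.natAdd m j) v x)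
        - I * (∑ j : Fin d, k j * ((pd (Fin.natAdd m j) g x : ℝ) : ℂ)) * v x
        + (∑ j : Fin d, (k j) ^ 2) * ((g x : ℝ) : ℂ) * v x
        + (V x - lam) * v x
      = ((Real.sqrt (g x) : ℝ) : ℂ) *
        (-(∑ i : Fin (m + d), pd i (pd i u) x)
          - 2 * I * (∑ j : Fin d, k j * pd (Fin.natAdd m j) u x)
          + (∑ j : Fin d, (k j) ^ 2) * u x
          + (Wl x - lam) * u x) :=
  stmt9_general m d g hg hgpos V u hu k lam v hv Wl hWl
end

section
/- Let d ≥ 1, let U be an open subset of ℝᵈ, let a < b be real numbers, and let f : U × (a, b) → ℝ be real-analytic on the open set U × (a, b) ⊂ ℝ^{d+1}. Let Λ ⊂ (a, b) have Lebesgue measure zero. Then the set {k ∈ U : there exists λ ∈ Λ such that f(k, λ) = 0 and ∂f/∂k₁(k, λ) ≠ 0} has Lebesgue measure zero in ℝᵈ. -/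
/-!
Near a point `(k₀, λ₀)` with `f = 0` and `∂f/∂k₁ ≠ 0`, the map `(k, λ) ↦ (k with k₁ := λ, f (k, λ))`
has invertible derivative, so by the inverse function theorem it has a Lipschitz local inverse `g`.
A nearby `k` with `f (k, λ) = 0` is recovered as `(g (x, 0)).1`, where `x` is `k` with `k₁ := λ`.
Hence, for `λ ∈ Λ`, these `k` form the Lipschitz image of a subset of `{x | x₁ ∈ Λ}`, which is
Lebesgue-null because `Λ` is. Countably many such neighbourhoods cover the whole set (Lindelöf).
-/

open MeasureTheory Set Filter Topology

theorem measure_image_null_of_locally_null {X Y : Type*} [TopologicalSpace X]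
    [SecondCountableTopology X] [MeasurableSpace Y] {μ : Measure Y} (g : X → Y) (T : Set X)
    (h : ∀ x ∈ T, ∃ N ∈ 𝓝[T] x, μ (g '' (T ∩ N)) = 0) : μ (g '' T) = 0 := by
  choose! N hN hN0 using h
  obtain ⟨t, htT, htc, hcov⟩ := TopologicalSpace.countable_cover_nhdsWithin hN
  have hsub : g '' T ⊆ ⋃ x ∈ t, g '' (T ∩ N x) := by
    rintro _ ⟨y, hy, rfl⟩
    obtain ⟨x, hx, hyx⟩ := mem_iUnion₂.1 (hcov hy)
    exact mem_biUnion hx ⟨y, ⟨hy, hyx⟩, rfl⟩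
  exact measure_mono_null hsub ((measure_biUnion_null_iff htc).2 fun x hx => hN0 x (htT hx))

theorem LipschitzOnWith.volume_image_null {ι : Type*} [Fintype ι] {K : NNReal}
    {g : (ι → ℝ) → ι → ℝ} {s : Set (ι → ℝ)} (hg : LipschitzOnWith K g s) (hs : volume s = 0) :
    volume (g '' s) = 0 := by
  rw [← hausdorffMeasure_pi_real] at hs ⊢
  exact le_antisymm
    ((hg.hausdorffMeasure_image_le (Nat.cast_nonneg _)).trans (by rw [hs, mul_zero])) zero_le

theorem HasFDerivAt.hasDerivAt_update {𝕜 ι E F : Type*} [NontriviallyNormedField 𝕜] [Fintype ι]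
    [DecidableEq ι] [NormedAddCommGroup E] [NormedSpace 𝕜 E] [NormedAddCommGroup F]
    [NormedSpace 𝕜 F] {f : (ι → 𝕜) × E → F} {f' : (ι → 𝕜) × E →L[𝕜] F} {k : ι → 𝕜} {t : E}
    (i : ι) (hf : HasFDerivAt f f' (k, t)) :
    HasDerivAt (fun s => f (Function.update k i s, t)) (f' (Pi.single i 1, 0)) (k i) := by
  have hcurve : HasDerivAt (fun s => (Function.update k i s, t)) (Pi.single i 1, 0) (k i) :=
    (_root_.hasDerivAt_update k i (k i)).prodMk (hasDerivAt_const _ t)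
  exact (by simpa using hf : HasFDerivAt f f' (Function.update k i (k i), t)).comp_hasDerivAt
    (k i) hcurve

section UpdateChart

variable {ι : Type*} [DecidableEq ι]

section Field

variable {𝕜 : Type*} [NontriviallyNormedField 𝕜]

def updateCLM (i : ι) : (ι → 𝕜) × 𝕜 →L[𝕜] ι → 𝕜 :=
  ContinuousLinearMap.pi fun j => if j = i then ContinuousLinearMap.snd 𝕜 _ _
    else (ContinuousLinearMap.proj j).comp (ContinuousLinearMap.fst 𝕜 _ _)

@[simp]
theorem updateCLM_apply (i : ι) (p : (ι → 𝕜) × 𝕜) :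
    updateCLM i p = Function.update p.1 i p.2 := by
  ext j
  by_cases h : j = i <;> simp [updateCLM, h]

theorem updateCLM_prod_injective {f' : (ι → 𝕜) × 𝕜 →L[𝕜] 𝕜} {i : ι}
    (hf' : f' (Pi.single i 1, 0) ≠ 0) : Function.Injective ((updateCLM i).prod f') := by
  refine (injective_iff_map_eq_zero _).2 fun ⟨h, s⟩ hL => ?_
  simp only [ContinuousLinearMap.prod_apply, updateCLM_apply, Prod.mk_eq_zero] at hL
  obtain ⟨hupd, hf0⟩ := hL
  have hdir : (h, s) = h i • ((Pi.single i 1 : ι → 𝕜), (0 : 𝕜)) := by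
    refine Prod.ext (funext fun j => ?_) ?_
    · by_cases hj : j = i
      · subst hj
        simp
      · simpa [hj, Function.update_of_ne hj] using congrFun hupd j
    · simpa using congrFun hupd i
  rw [hdir, map_smul, smul_eq_mul, mul_eq_zero] at hf0
  rw [hdir, hf0.resolve_right hf', zero_smul]

end Field

variable [Fintype ι]

def updateChart (f : (ι → ℝ) × ℝ → ℝ) (i : ι) (p : (ι → ℝ) × ℝ) : (ι → ℝ) × ℝ :=
  (Function.update p.1 i p.2, f p)

theorem exists_nhds_volume_fst_image_null {f : (ι → ℝ) × ℝ → ℝ} {f' : (ι → ℝ) × ℝ →L[ℝ] ℝ}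
    {p₀ : (ι → ℝ) × ℝ} {i : ι} (hf : HasStrictFDerivAt f f' p₀) (hf' : f' (Pi.single i 1, 0) ≠ 0)
    {Λ : Set ℝ} (hΛ : volume Λ = 0) :
    ∃ N ∈ 𝓝 p₀, volume (Prod.fst '' {p ∈ N | p.2 ∈ Λ ∧ f p = 0}) = 0 := by
  set Ψ := updateChart f i
  set e := (LinearEquiv.ofInjectiveEndo _ (updateCLM_prod_injective hf')).toContinuousLinearEquiv
  have hΨ : HasStrictFDerivAt Ψ (e : (ι → ℝ) × ℝ →L[ℝ] (ι → ℝ) × ℝ) p₀ := by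
    have hΨ_eq : Ψ = fun p => (updateCLM i p, f p) := by
      funext p
      simp [Ψ, updateChart]
    rw [hΨ_eq]
    exact (updateCLM i).hasStrictFDerivAt.prodMk hf
  set g := hΨ.localInverse _ _ _
  obtain ⟨K, s, hs, hK⟩ := hΨ.to_localInverse.exists_lipschitzOnWith
  set N := {p | g (Ψ p) = p} ∩ Ψ ⁻¹' s
  refine ⟨N, inter_mem hΨ.eventually_left_inverse (hΨ.continuousAt.preimage_mem_nhds hs), ?_⟩
  have hsub : Prod.fst '' {p ∈ N | p.2 ∈ Λ ∧ f p = 0} ⊆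
      (fun x => (g (x, 0)).1) '' ({x | x i ∈ Λ} ∩ {x | (x, 0) ∈ s}) := by
    rintro _ ⟨p, ⟨⟨hpg : g (Ψ p) = p, hps⟩, hpΛ, hp0⟩, rfl⟩
    have hΨp : Ψ p = (Function.update p.1 i p.2, 0) := by simp [Ψ, updateChart, hp0]
    refine ⟨Function.update p.1 i p.2, ⟨by simpa using hpΛ, ?_⟩, ?_⟩
    · show (_, (0 : ℝ)) ∈ s
      rw [← hΨp]
      exact hps
    · simp only [← hΨp, hpg]
  have hgLip := (LipschitzWith.prod_fst.comp_lipschitzOnWith hK).comp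
    (LipschitzWith.prodMk_right (0 : ℝ)).lipschitzOnWith (fun x hx => hx)
  refine measure_mono_null hsub ((hgLip.mono inter_subset_right).volume_image_null
    (measure_mono_null inter_subset_left ?_))
  exact Measure.pi_eval_preimage_null _ hΛ

theorem volume_fst_image_null_of_partialDeriv_ne_zero {f : (ι → ℝ) × ℝ → ℝ} (i : ι)
    {Λ : Set ℝ} (hΛ : volume Λ = 0) :
    volume (Prod.fst '' {p | p.2 ∈ Λ ∧ f p = 0 ∧ ∃ f' : (ι → ℝ) × ℝ →L[ℝ] ℝ,
      HasStrictFDerivAt f f' p ∧ f' (Pi.single i 1, 0) ≠ 0}) = 0 := by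
  refine measure_image_null_of_locally_null _ _ fun p hp => ?_
  obtain ⟨-, -, f', hf, hf'⟩ := hp
  obtain ⟨N, hN, hN0⟩ := exists_nhds_volume_fst_image_null hf hf' hΛ
  refine ⟨N, mem_nhdsWithin_of_mem_nhds hN, measure_mono_null (image_mono ?_) hN0⟩
  exact fun q ⟨⟨hqΛ, hq0, _⟩, hqN⟩ => ⟨hqN, hqΛ, hq0⟩

end UpdateChart

theorem stmt11 (d : ℕ) (hd : 1 ≤ d) (U : Set (Fin d → ℝ))
    (a b : ℝ)
    (f : (Fin d → ℝ) × ℝ → ℝ)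
    (hf : AnalyticOnNhd ℝ f (U ×ˢ Ioo a b))
    (Λ : Set ℝ) (hΛsub : Λ ⊆ Ioo a b) (hΛ : volume Λ = 0) :
    volume {k ∈ U | ∃ lam ∈ Λ, f (k, lam) = 0 ∧
      deriv (fun t => f (Function.update k (⟨0, by omega⟩ : Fin d) t, lam))
        (k ⟨0, by omega⟩) ≠ 0} = 0 := by
  refine measure_mono_null ?_
    (volume_fst_image_null_of_partialDeriv_ne_zero (f := f) (⟨0, by omega⟩ : Fin d) hΛ)
  rintro k ⟨hkU, t, htΛ, hft, hderiv⟩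
  have hA := hf (k, t) ⟨hkU, hΛsub htΛ⟩
  refine ⟨(k, t), ⟨htΛ, hft, fderiv ℝ f (k, t), hA.hasStrictFDerivAt, ?_⟩, rfl⟩
  rwa [← (hA.differentiableAt.hasFDerivAt.hasDerivAt_update _).deriv]
end
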